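/- Vanishing order estimate from a three-ball inequality: suppose a function F : (0, R₀] → [0, ∞) is nondecreasing (F(R) = ∫_{|x|<R}|u|² dx) and satisfies, for all sufficiently small R₁ and fixed 0 < R₂ < R₃ ≤ R₀, the inequality F(R₂) ≤ C F(R₁)^τ F(R₃)^{1−τ} with τ = c/(−log R₁) for constants C, c > 0. If F(R₂) > 0, then there exist K > 0 and m > 0 such that F(R) ≥ K R^m for all sufficiently small R > 0; explicitly one may take K = F(R₃) and m = (1/c)(log C + log(F(R₃)/F(R₂))). -/

import Mathlib

/-! Put `τ = c / (-log R)`. Since `F R ^ τ * F R₃ ^ (1 - τ) = F R₃ * (F R / F R₃) ^ τ`, the three-ball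
inequality solves to `F R ≥ F R₃ * q ^ (1 / τ)` with `q = F R₂ / (C * F R₃)`, and
`q ^ (1 / τ) = q ^ (-log R / c) = R ^ (-log q / c)` is exactly `R ^ m`. -/

open Real

lemma le_of_le_mul_rpow_mul_rpow {A B C x τ : ℝ} (hA : 0 ≤ A) (hB : 0 < B) (hC : 0 < C)
    (hx : 0 ≤ x) (hτ : 0 < τ) (h : A ≤ C * x ^ τ * B ^ (1 - τ)) :
    B * (A / (C * B)) ^ τ⁻¹ ≤ x := by
  have hq : A / (C * B) ≤ (x / B) ^ τ := by
    rw [div_le_iff₀ (by positivity), div_rpow hx hB.le]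
    calc A ≤ C * x ^ τ * B ^ (1 - τ) := h
      _ = x ^ τ / B ^ τ * (C * B) := by rw [rpow_sub hB, rpow_one]; ring
  calc B * (A / (C * B)) ^ τ⁻¹ ≤ B * ((x / B) ^ τ) ^ τ⁻¹ := by
        gcongr
      _ = x := by rw [rpow_rpow_inv (by positivity) hτ.ne', mul_div_cancel₀ _ hB.ne']

lemma rpow_mul_log_comm {q R : ℝ} (hq : 0 < q) (hR : 0 < R) (s : ℝ) :
    q ^ (s * log R) = R ^ (s * log q) := by
  rw [rpow_def_of_pos hq, rpow_def_of_pos hR]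
  ring_nf

lemma three_ball_lower_bound {A B C c x R : ℝ} (hA : 0 < A) (hB : 0 < B) (hC : 0 < C)
    (hc : 0 < c) (hx : 0 ≤ x) (hR₀ : 0 < R) (hR₁ : R < 1)
    (h : A ≤ C * x ^ (c / -log R) * B ^ (1 - c / -log R)) :
    B * R ^ ((1 / c) * (log C + log (B / A))) ≤ x := by
  have hlog : 0 < -log R := neg_pos.mpr (log_neg hR₀ hR₁)
  have hsolved := le_of_le_mul_rpow_mul_rpow hA.le hB hC hx (div_pos hc hlog) h
  have hexp : (1 / c) * (log C + log (B / A)) = (-1 / c) * log (A / (C * B)) := by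
    rw [log_div hA.ne' (by positivity), log_mul hC.ne' hB.ne', log_div hB.ne' hA.ne']
    ring
  have hpow : (A / (C * B)) ^ (c / -log R)⁻¹ = R ^ ((1 / c) * (log C + log (B / A))) := by
    rw [hexp, ← rpow_mul_log_comm (by positivity) hR₀]
    congr 1
    field_simp
  rwa [hpow] at hsolved

lemma exists_pos_nat_exponent_of_mul_rpow_le {K m R' : ℝ} {f : ℝ → ℝ} (hK : 0 ≤ K)
    (hR' : 0 < R') (h : ∀ R, 0 < R → R < R' → K * R ^ m ≤ f R) :
    ∃ n > 0, ∃ R'' > 0, ∀ R, 0 < R → R < R'' → K * R ^ n ≤ f R := by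
  refine ⟨⌈m⌉₊ + 1, Nat.succ_pos _, min R' 1, lt_min hR' one_pos, fun R hR hRR'' => ?_⟩
  calc K * R ^ (⌈m⌉₊ + 1) = K * R ^ ((⌈m⌉₊ + 1 : ℕ) : ℝ) := by rw [rpow_natCast]
    _ ≤ K * R ^ m := by
        refine mul_le_mul_of_nonneg_left (rpow_le_rpow_of_exponent_ge hR
          (hRR''.trans_le (min_le_right _ _)).le ?_) hK
        push_cast
        linarith [Nat.le_ceil m]
    _ ≤ f R := h R hR (hRR''.trans_le (min_le_left _ _))

/-- Vanishing order estimate from a three-ball inequality: if `F` is nondecreasing,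
`F(R₂) ≤ C F(R₁)^τ F(R₃)^{1−τ}` with `τ = c/(−log R₁)` for all small `R₁`, and
`F(R₂) > 0`, then `F(R) ≥ K R^m` for small `R`; explicitly one may take
`K = F(R₃)` and `m = (1/c)(log C + log(F(R₃)/F(R₂)))`. -/
theorem vanishing_order_estimate (R₀ R₂ R₃ C c : ℝ) (F : ℝ → ℝ)
    (hR₂ : 0 < R₂) (hR₂R₃ : R₂ < R₃) (hR₃ : R₃ ≤ R₀)
    (hC : 1 ≤ C) (hc : 0 < c)
    (hFnonneg : ∀ R, 0 < R → R ≤ R₀ → 0 ≤ F R)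
    (hFmono : ∀ s t, 0 < s → s ≤ t → t ≤ R₀ → F s ≤ F t)
    (hthree : ∃ Rstar > 0, ∀ R₁, 0 < R₁ → R₁ < Rstar →
      F R₂ ≤ C * (F R₁) ^ (c / (-Real.log R₁)) * (F R₃) ^ (1 - c / (-Real.log R₁)))
    (hpos : 0 < F R₂) :
    (∃ K > 0, ∃ m > 0, ∃ R' > 0, ∀ R, 0 < R → R < R' → K * R ^ m ≤ F R)
    ∧ (∃ R' > 0, ∀ R, 0 < R → R < R' →
        F R₃ * R ^ ((1 / c) * (Real.log C + Real.log (F R₃ / F R₂))) ≤ F R) := by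
  obtain ⟨Rstar, hRstar, hthree⟩ := hthree
  have hF₃ : 0 < F R₃ := hpos.trans_le (hFmono R₂ R₃ hR₂ hR₂R₃.le hR₃)
  have hbound : ∀ R, 0 < R → R < min Rstar (min 1 R₂) →
      F R₃ * R ^ ((1 / c) * (Real.log C + Real.log (F R₃ / F R₂))) ≤ F R := by
    intro R hR hRlt
    simp only [lt_min_iff] at hRlt
    obtain ⟨hRstar, hR₁, hRR₂⟩ := hRlt
    exact three_ball_lower_bound hpos hF₃ (by linarith) hc
      (hFnonneg R hR (by linarith)) hR hR₁ (hthree R hR hRstar)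
  have hR' : 0 < min Rstar (min 1 R₂) := lt_min hRstar (lt_min one_pos hR₂)
  exact ⟨⟨F R₃, hF₃, exists_pos_nat_exponent_of_mul_rpow_le hF₃.le hR' hbound⟩, _, hR', hbound⟩
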